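/- For every odd integer k ≥ 3, the equidistant dimension of the Johnson graph J(2k,k) equals (1/2)·C(2k,k), where C(2k,k) is the binomial coefficient. -/

import Mathlib

/-- The Johnson graph `J(n,k)`: vertices are the `k`-element subsets of an `n`-element set,
two vertices being adjacent iff their intersection has cardinality `k-1`. -/
def johnsonGraph (n k : ℕ) : SimpleGraph {A : Finset (Fin n) // A.card = k} where
  Adj A B := A ≠ B ∧ (A.1 ∩ B.1).card = k - 1
  symm := ⟨fun A B ⟨hne, hc⟩ => ⟨hne.symm, by rwa [Finset.inter_comm]⟩⟩
  loopless := ⟨fun A ⟨hne, _⟩ => hne rfl⟩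

/-- The Kneser graph `K(n,k)`: vertices are the `k`-element subsets of an `n`-element set,
two vertices being adjacent iff they are disjoint. -/
def kneserGraph (n k : ℕ) : SimpleGraph {A : Finset (Fin n) // A.card = k} where
  Adj A B := A ≠ B ∧ A.1 ∩ B.1 = ∅
  symm := ⟨fun A B ⟨hne, hc⟩ => ⟨hne.symm, by rwa [Finset.inter_comm]⟩⟩
  loopless := ⟨fun A ⟨hne, _⟩ => hne rfl⟩

/-- `S` is a distance-equalizer set of `G` if for every two distinct vertices
`u, v ∉ S` there is a vertex `x ∈ S` equidistant from `u` and `v`. -/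
def IsDistanceEqualizerSet {V : Type*} (G : SimpleGraph V) (S : Set V) : Prop :=
  ∀ u v : V, u ∉ S → v ∉ S → u ≠ v → ∃ x ∈ S, G.dist u x = G.dist v x

/-- The equidistant dimension of `G`: the minimum cardinality of a distance-equalizer set. -/
noncomputable def eqdim {V : Type*} [Fintype V] (G : SimpleGraph V) : ℕ :=
  sInf {m | ∃ S : Finset V, IsDistanceEqualizerSet G ↑S ∧ S.card = m}

instance (n k : ℕ) : DecidableRel (johnsonGraph n k).Adj :=
  fun A B => inferInstanceAs (Decidable (A ≠ B ∧ (A.1 ∩ B.1).card = k - 1))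

instance (n k : ℕ) : DecidableRel (kneserGraph n k).Adj :=
  fun A B => inferInstanceAs (Decidable (A ≠ B ∧ A.1 ∩ B.1 = ∅))

/-! ### Auxiliary lemmas -/

section Aux

variable {n k : ℕ}

/-- One step along an edge of the Johnson graph changes the intersection with any
fixed set by at most one. -/
lemma johnson_step {A C : Finset (Fin n)} (B : Finset (Fin n)) (_hA : A.card = k)
    (hC : C.card = k) (hk : 1 ≤ k) (h : (A ∩ C).card = k - 1) :
    (C ∩ B).card ≤ (A ∩ B).card + 1 := by
  have hsub : C ∩ B ⊆ (A ∩ B) ∪ (C \ A) := by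
    intro x hx
    rw [Finset.mem_inter] at hx
    by_cases hxA : x ∈ A
    · exact Finset.mem_union_left _ (Finset.mem_inter.mpr ⟨hxA, hx.2⟩)
    · exact Finset.mem_union_right _ (Finset.mem_sdiff.mpr ⟨hx.1, hxA⟩)
  have h1 : (C \ A).card = 1 := by
    have h2 := Finset.card_sdiff_add_card_inter C A
    rw [Finset.inter_comm] at h2
    omega
  calc (C ∩ B).card ≤ ((A ∩ B) ∪ (C \ A)).card := Finset.card_le_card hsub
    _ ≤ (A ∩ B).card + (C \ A).card := Finset.card_union_le _ _
    _ = (A ∩ B).card + 1 := by omega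

lemma johnson_walk_len (hk : 1 ≤ k) {A B : {A : Finset (Fin n) // A.card = k}}
    (w : (johnsonGraph n k).Walk A B) : k - (A.1 ∩ B.1).card ≤ w.length := by
  induction w with
  | nil =>
    rename_i A'
    rw [Finset.inter_self, A'.2]
    simp
  | @cons A' C' B' h p ih =>
    have hstep := johnson_step B'.1 A'.2 C'.2 hk (h : A' ≠ C' ∧ (A'.1 ∩ C'.1).card = k - 1).2
    have hle : (A'.1 ∩ B'.1).card ≤ k := by
      have h' : A'.1 ∩ B'.1 ⊆ A'.1 := Finset.inter_subset_left
      have := Finset.card_le_card h'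
      rw [A'.2] at this; exact this
    rw [SimpleGraph.Walk.length_cons]
    omega

lemma johnson_exists_walk (hk : 1 ≤ k) :
    ∀ (d : ℕ) (A B : {A : Finset (Fin n) // A.card = k}),
      k - (A.1 ∩ B.1).card = d → ∃ w : (johnsonGraph n k).Walk A B, w.length = d := by
  intro d
  induction d with
  | zero =>
    intro A B hd
    have hle : (A.1 ∩ B.1).card ≤ k := by
      have h' : A.1 ∩ B.1 ⊆ A.1 := Finset.inter_subset_left
      have := Finset.card_le_card h'
      rw [A.2] at this; exact this
    have hcard : (A.1 ∩ B.1).card = k := by omega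
    have h1 : A.1 ∩ B.1 = A.1 :=
      Finset.eq_of_subset_of_card_le Finset.inter_subset_left (by rw [A.2, hcard])
    have h2 : A.1 ∩ B.1 = B.1 :=
      Finset.eq_of_subset_of_card_le Finset.inter_subset_right (by rw [B.2, hcard])
    have hAB : A = B := Subtype.ext (h1.symm.trans h2)
    subst hAB
    exact ⟨SimpleGraph.Walk.nil, rfl⟩
  | succ d ih =>
    intro A B hd
    have hAB : (A.1 ∩ B.1).card < k := by omega
    have hsd1 := Finset.card_sdiff_add_card_inter A.1 B.1
    have hsd2 := Finset.card_sdiff_add_card_inter B.1 A.1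
    rw [A.2] at hsd1
    rw [B.2, Finset.inter_comm] at hsd2
    have hAne : (A.1 \ B.1).Nonempty := by rw [← Finset.card_pos]; omega
    have hBne : (B.1 \ A.1).Nonempty := by rw [← Finset.card_pos]; omega
    obtain ⟨a, ha⟩ := hAne
    obtain ⟨b, hb⟩ := hBne
    rw [Finset.mem_sdiff] at ha hb
    have hbA : b ∉ A.1.erase a := fun h => hb.2 (Finset.mem_of_mem_erase h)
    have hA'card : (insert b (A.1.erase a)).card = k := by
      rw [Finset.card_insert_of_notMem hbA, Finset.card_erase_of_mem ha.1, A.2]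
      omega
    set A' : {A : Finset (Fin n) // A.card = k} := ⟨insert b (A.1.erase a), hA'card⟩ with hA'
    have hinter : A.1 ∩ A'.1 = A.1.erase a := by
      ext x
      simp only [hA', Finset.mem_inter, Finset.mem_insert, Finset.mem_erase]
      constructor
      · rintro ⟨hxA, (rfl | ⟨hxa, _⟩)⟩
        · exact absurd hxA hb.2
        · exact ⟨hxa, hxA⟩
      · rintro ⟨hxa, hxA⟩
        exact ⟨hxA, Or.inr ⟨hxa, hxA⟩⟩
    have hadj : (johnsonGraph n k).Adj A A' := by
      refine (⟨?_, ?_⟩ : A ≠ A' ∧ (A.1 ∩ A'.1).card = k - 1)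
      · intro hEq
        have hbA' : b ∈ A'.1 := Finset.mem_insert_self b _
        rw [← hEq] at hbA'
        exact hb.2 hbA'
      · rw [hinter, Finset.card_erase_of_mem ha.1, A.2]
    have hA'B : A'.1 ∩ B.1 = insert b (A.1 ∩ B.1) := by
      ext x
      simp only [hA', Finset.mem_inter, Finset.mem_insert, Finset.mem_erase]
      constructor
      · rintro ⟨(rfl | ⟨hxa, hxA⟩), hxB⟩
        · exact Or.inl rfl
        · exact Or.inr ⟨hxA, hxB⟩
      · rintro (rfl | ⟨hxA, hxB⟩)
        · exact ⟨Or.inl rfl, hb.1⟩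
        · refine ⟨Or.inr ⟨?_, hxA⟩, hxB⟩
          rintro rfl
          exact ha.2 hxB
    have hbAB : b ∉ A.1 ∩ B.1 := fun h => hb.2 (Finset.mem_inter.mp h).1
    have hA'Bcard : (A'.1 ∩ B.1).card = (A.1 ∩ B.1).card + 1 := by
      rw [hA'B, Finset.card_insert_of_notMem hbAB]
    obtain ⟨w, hw⟩ := ih A' B (by omega)
    exact ⟨SimpleGraph.Walk.cons hadj w, by rw [SimpleGraph.Walk.length_cons, hw]⟩

/-- The distance formula in the Johnson graph. -/
lemma johnson_dist (hk : 1 ≤ k) (A B : {A : Finset (Fin n) // A.card = k}) :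
    (johnsonGraph n k).dist A B = k - (A.1 ∩ B.1).card := by
  obtain ⟨w, hw⟩ := johnson_exists_walk hk (k - (A.1 ∩ B.1).card) A B rfl
  have h1 := SimpleGraph.dist_le w
  have hr : (johnsonGraph n k).Reachable A B := ⟨w⟩
  obtain ⟨p, hp⟩ := hr.exists_walk_length_eq_dist
  have h2 := johnson_walk_len hk p
  omega

end Aux

/-- Complementation on vertices of `J(2k,k)`. -/
def jc (k : ℕ) (A : {A : Finset (Fin (2 * k)) // A.card = k}) :
    {A : Finset (Fin (2 * k)) // A.card = k} :=
  ⟨A.1ᶜ, by rw [Finset.card_compl, A.2, Fintype.card_fin]; omega⟩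

lemma jc_jc (k : ℕ) (A : {A : Finset (Fin (2 * k)) // A.card = k}) : jc k (jc k A) = A :=
  Subtype.ext (compl_compl A.1)

lemma eqdim_lower_aux (k : ℕ) (hk : 3 ≤ k) (hodd : Odd k)
    (S : Finset {A : Finset (Fin (2 * k)) // A.card = k})
    (hS : IsDistanceEqualizerSet (johnsonGraph (2 * k) k) ↑S) :
    Nat.choose (2 * k) k / 2 ≤ S.card := by
  have hk1 : 1 ≤ k := by omega
  obtain ⟨m, hm⟩ := hodd
  have key : ∀ A, A ∈ S ∨ jc k A ∈ S := by
    intro A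
    by_contra hcon
    push_neg at hcon
    have hne : A ≠ jc k A := by
      intro h
      have h2 : A.1 = A.1ᶜ := congrArg Subtype.val h
      have hA : A.1.Nonempty := Finset.card_pos.mp (by rw [A.2]; omega)
      obtain ⟨a, ha⟩ := hA
      have : a ∈ A.1ᶜ := h2 ▸ ha
      exact (Finset.mem_compl.mp this) ha
    obtain ⟨x, hxS, hdist⟩ :=
      hS A (jc k A) (fun h => hcon.1 (Finset.mem_coe.mp h))
        (fun h => hcon.2 (Finset.mem_coe.mp h)) hne
    rw [johnson_dist hk1, johnson_dist hk1] at hdist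
    have e1 : (A.1 ∩ x.1).card = (x.1 ∩ A.1).card := by rw [Finset.inter_comm]
    have e2' : (jc k A).1 ∩ x.1 = x.1 \ A.1 := by
      ext y
      simp only [jc, Finset.mem_inter, Finset.mem_sdiff, Finset.mem_compl]
      tauto
    have e2 : ((jc k A).1 ∩ x.1).card = (x.1 \ A.1).card := by rw [e2']
    have hsum := Finset.card_sdiff_add_card_inter x.1 A.1
    rw [x.2] at hsum
    have hle1 : (A.1 ∩ x.1).card ≤ k := by
      have h' : A.1 ∩ x.1 ⊆ A.1 := Finset.inter_subset_left
      have := Finset.card_le_card h'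
      rw [A.2] at this; exact this
    omega
  have hcover : (Finset.univ : Finset {A : Finset (Fin (2 * k)) // A.card = k}) ⊆
      S ∪ S.image (jc k) := by
    intro A _
    rcases key A with h | h
    · exact Finset.mem_union_left _ h
    · exact Finset.mem_union_right _ (Finset.mem_image.mpr ⟨jc k A, h, jc_jc k A⟩)
  have hc1 := Finset.card_le_card hcover
  have hc2 := Finset.card_union_le S (S.image (jc k))
  have hc3 := Finset.card_image_le (f := jc k) (s := S)
  have hcV : (Finset.univ : Finset {A : Finset (Fin (2 * k)) // A.card = k}).card
      = Nat.choose (2 * k) k := by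
    rw [Finset.card_univ, Fintype.card_finset_len, Fintype.card_fin]
  omega

lemma johnson_equalizer (k : ℕ) (hk : 3 ≤ k) (hodd : Odd k) (z : Fin (2 * k)) :
    IsDistanceEqualizerSet (johnsonGraph (2 * k) k)
      ↑(Finset.univ.filter fun A : {A : Finset (Fin (2 * k)) // A.card = k} => z ∈ A.1) := by
  intro u v hu hv huv
  have hk1 : 1 ≤ k := by omega
  obtain ⟨m, hm⟩ := hodd
  have hu' : z ∉ u.1 := fun h =>
    hu (Finset.mem_coe.mpr (Finset.mem_filter.mpr ⟨Finset.mem_univ _, h⟩))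
  have hv' : z ∉ v.1 := fun h =>
    hv (Finset.mem_coe.mpr (Finset.mem_filter.mpr ⟨Finset.mem_univ _, h⟩))
  have hUcard : u.1.card = k := u.2
  have hVcard : v.1.card = k := v.2
  set t := (u.1 ∩ v.1).card with ht
  have hunion := Finset.card_union_add_card_inter u.1 v.1
  have hUW_subset : u.1 ∪ v.1 ⊆ Finset.univ.erase z := by
    intro x hx
    refine Finset.mem_erase.mpr ⟨?_, Finset.mem_univ x⟩
    rintro rfl
    rcases Finset.mem_union.mp hx with h | h
    · exact hu' h
    · exact hv' h
  have hUWcard : (u.1 ∪ v.1).card ≤ 2 * k - 1 := by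
    calc (u.1 ∪ v.1).card ≤ (Finset.univ.erase z).card := Finset.card_le_card hUW_subset
      _ = 2 * k - 1 := by
          rw [Finset.card_erase_of_mem (Finset.mem_univ z), Finset.card_univ, Fintype.card_fin]
  have htlek : t ≤ k := by
    have h' : u.1 ∩ v.1 ⊆ u.1 := Finset.inter_subset_left
    have := Finset.card_le_card h'
    rw [hUcard] at this; exact this
  have htne : t ≠ k := by
    intro h
    have h1 : u.1 ∩ v.1 = u.1 :=
      Finset.eq_of_subset_of_card_le Finset.inter_subset_left (by rw [hUcard]; omega)
    have h2 : u.1 ∩ v.1 = v.1 :=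
      Finset.eq_of_subset_of_card_le Finset.inter_subset_right (by rw [hVcard]; omega)
    exact huv (Subtype.ext (h1.symm.trans h2))
  have ht1 : 1 ≤ t := by omega
  set q := min m (k - t) with hq
  set p := k - 1 - 2 * q with hp
  have hq1 : q ≤ m := min_le_left _ _
  have hq2 : q ≤ k - t := min_le_right _ _
  have hq3 : q = m ∨ q = k - t := min_choice _ _
  have hQcard : (u.1 \ v.1).card = k - t := by
    have := Finset.card_sdiff_add_card_inter u.1 v.1
    omega
  have hRcard : (v.1 \ u.1).card = k - t := by
    have := Finset.card_sdiff_add_card_inter v.1 u.1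
    rw [Finset.inter_comm] at this
    omega
  have hpt : p ≤ t := by omega
  obtain ⟨Q', hQ'sub, hQ'card⟩ := Finset.exists_subset_card_eq (n := q) (by omega : q ≤ (u.1 \ v.1).card)
  obtain ⟨R', hR'sub, hR'card⟩ := Finset.exists_subset_card_eq (n := q) (by omega : q ≤ (v.1 \ u.1).card)
  obtain ⟨P', hP'sub, hP'card⟩ := Finset.exists_subset_card_eq (n := p) (by omega : p ≤ (u.1 ∩ v.1).card)
  have hzX : z ∉ Q' ∪ R' ∪ P' := by
    intro h
    rcases Finset.mem_union.mp h with h | h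
    · rcases Finset.mem_union.mp h with h | h
      · exact hu' (Finset.mem_sdiff.mp (hQ'sub h)).1
      · exact hv' (Finset.mem_sdiff.mp (hR'sub h)).1
    · exact hu' (Finset.mem_inter.mp (hP'sub h)).1
  have hQR : Disjoint Q' R' := by
    rw [Finset.disjoint_left]
    intro x hx hx'
    exact (Finset.mem_sdiff.mp (hR'sub hx')).2 (Finset.mem_sdiff.mp (hQ'sub hx)).1
  have hQP : Disjoint Q' P' := by
    rw [Finset.disjoint_left]
    intro x hx hx'
    exact (Finset.mem_sdiff.mp (hQ'sub hx)).2 (Finset.mem_inter.mp (hP'sub hx')).2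
  have hRP : Disjoint R' P' := by
    rw [Finset.disjoint_left]
    intro x hx hx'
    exact (Finset.mem_sdiff.mp (hR'sub hx)).2 (Finset.mem_inter.mp (hP'sub hx')).1
  have hcardunion : (Q' ∪ R' ∪ P').card = q + q + p := by
    rw [Finset.card_union_of_disjoint (Finset.disjoint_union_left.mpr ⟨hQP, hRP⟩),
      Finset.card_union_of_disjoint hQR, hQ'card, hR'card, hP'card]
  have hXcard : (insert z (Q' ∪ R' ∪ P')).card = k := by
    rw [Finset.card_insert_of_notMem hzX, hcardunion]
    omega
  set X : {A : Finset (Fin (2 * k)) // A.card = k} := ⟨insert z (Q' ∪ R' ∪ P'), hXcard⟩ with hX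
  have hUX : u.1 ∩ X.1 = Q' ∪ P' := by
    apply Finset.Subset.antisymm
    · intro x hx
      obtain ⟨hxU, hxX⟩ := Finset.mem_inter.mp hx
      rcases Finset.mem_insert.mp hxX with rfl | hx2
      · exact absurd hxU hu'
      rcases Finset.mem_union.mp hx2 with hx3 | hxP
      · rcases Finset.mem_union.mp hx3 with hxQ | hxR
        · exact Finset.mem_union_left _ hxQ
        · exact absurd hxU (Finset.mem_sdiff.mp (hR'sub hxR)).2
      · exact Finset.mem_union_right _ hxP
    · intro x hx
      rcases Finset.mem_union.mp hx with hxQ | hxP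
      · exact Finset.mem_inter.mpr ⟨(Finset.mem_sdiff.mp (hQ'sub hxQ)).1,
          Finset.mem_insert_of_mem (Finset.mem_union_left _ (Finset.mem_union_left _ hxQ))⟩
      · exact Finset.mem_inter.mpr ⟨(Finset.mem_inter.mp (hP'sub hxP)).1,
          Finset.mem_insert_of_mem (Finset.mem_union_right _ hxP)⟩
  have hVX : v.1 ∩ X.1 = R' ∪ P' := by
    apply Finset.Subset.antisymm
    · intro x hx
      obtain ⟨hxV, hxX⟩ := Finset.mem_inter.mp hx
      rcases Finset.mem_insert.mp hxX with rfl | hx2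
      · exact absurd hxV hv'
      rcases Finset.mem_union.mp hx2 with hx3 | hxP
      · rcases Finset.mem_union.mp hx3 with hxQ | hxR
        · exact absurd hxV (Finset.mem_sdiff.mp (hQ'sub hxQ)).2
        · exact Finset.mem_union_left _ hxR
      · exact Finset.mem_union_right _ hxP
    · intro x hx
      rcases Finset.mem_union.mp hx with hxR | hxP
      · exact Finset.mem_inter.mpr ⟨(Finset.mem_sdiff.mp (hR'sub hxR)).1,
          Finset.mem_insert_of_mem (Finset.mem_union_left _ (Finset.mem_union_right _ hxR))⟩
      · exact Finset.mem_inter.mpr ⟨(Finset.mem_inter.mp (hP'sub hxP)).2,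
          Finset.mem_insert_of_mem (Finset.mem_union_right _ hxP)⟩
  refine ⟨X, ?_, ?_⟩
  · exact Finset.mem_coe.mpr (Finset.mem_filter.mpr ⟨Finset.mem_univ _,
      Finset.mem_insert_self z _⟩)
  · rw [johnson_dist hk1, johnson_dist hk1, hUX, hVX,
      Finset.card_union_of_disjoint hQP, Finset.card_union_of_disjoint hRP,
      hQ'card, hR'card]

/-- For every odd `k ≥ 3`, the equidistant dimension of the Johnson graph `J(2k,k)` equals
half the central binomial coefficient `C(2k,k)`. -/
theorem eqdim_johnson_twok_k (k : ℕ) (hk : 3 ≤ k) (hodd : Odd k) :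
    eqdim (johnsonGraph (2 * k) k) = Nat.choose (2 * k) k / 2 := by
  have hzlt : 0 < 2 * k := by omega
  set z : Fin (2 * k) := ⟨0, hzlt⟩ with hz
  set S := Finset.univ.filter
    (fun A : {A : Finset (Fin (2 * k)) // A.card = k} => z ∈ A.1) with hSdef
  have hcardV : (Finset.univ : Finset {A : Finset (Fin (2 * k)) // A.card = k}).card
      = Nat.choose (2 * k) k := by
    rw [Finset.card_univ, Fintype.card_finset_len, Fintype.card_fin]
  have hbij : S.card = (Finset.univ.filter
      (fun A : {A : Finset (Fin (2 * k)) // A.card = k} => ¬ z ∈ A.1)).card := by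
    apply Finset.card_bij' (fun A _ => jc k A) (fun A _ => jc k A)
    · intro A hA
      rw [Finset.mem_filter] at hA ⊢
      exact ⟨Finset.mem_univ _, fun h => (Finset.mem_compl.mp h) hA.2⟩
    · intro A hA
      rw [Finset.mem_filter] at hA ⊢
      exact ⟨Finset.mem_univ _, Finset.mem_compl.mpr hA.2⟩
    · intro A _; exact jc_jc k A
    · intro A _; exact jc_jc k A
  have hsplit := Finset.card_filter_add_card_filter_not
    (s := (Finset.univ : Finset {A : Finset (Fin (2 * k)) // A.card = k}))
    (p := fun A => z ∈ A.1)
  have hScard : 2 * S.card = Nat.choose (2 * k) k := by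
    rw [← hcardV, ← hsplit, ← hSdef, ← hbij]
    omega
  have hcard' : S.card = Nat.choose (2 * k) k / 2 := by omega
  have hmem : S.card ∈ {m | ∃ T : Finset {A : Finset (Fin (2 * k)) // A.card = k},
      IsDistanceEqualizerSet (johnsonGraph (2 * k) k) ↑T ∧ T.card = m} :=
    ⟨S, johnson_equalizer k hk hodd z, rfl⟩
  rw [eqdim, ← hcard']
  apply le_antisymm
  · exact Nat.sInf_le hmem
  · refine le_csInf ⟨S.card, hmem⟩ ?_
    rintro m ⟨T, hT, rfl⟩
    have := eqdim_lower_aux k hk hodd T hT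
    omega
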